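/- arXiv:1212.1432 — 9 statements merged into one kernel-verified Lean document; each statement's English description precedes it below -/
import Mathlib

section
/- The limit as n → ∞ of (∑_{k=1}^n H_k/k − γ·log n − (1/2)·log² n) equals (ζ(2) + γ²)/2, where H_k is the k-th harmonic number and γ is the Euler–Mascheroni constant. -/
open Filter Real Finset Topology

/-!
Expanding the square `H_n²` gives `∑_{k ≤ n} H_k / k = (H_n² + ∑_{k ≤ n} 1/k²) / 2`, so the sequence equals
`(H_n - log n)² / 2 + log n · (H_n - log n - γ) + (∑_{k ≤ n} 1/k²) / 2`. The first and last terms tend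
to `γ² / 2` and `ζ(2) / 2`; the middle one tends to `0` because `0 ≤ H_n - log n - γ ≤ 1/n`.
-/

theorem sum_Icc_harmonic_div_eq (n : ℕ) :
    ∑ k ∈ Icc 1 n, (harmonic k : ℝ) / k
      = ((harmonic n : ℝ) ^ 2 + ∑ k ∈ Icc 1 n, 1 / (k : ℝ) ^ 2) / 2 := by
  induction n with
  | zero => simp
  | succ n ih =>
    rw [sum_Icc_succ_top (by omega), sum_Icc_succ_top (by omega), ih, harmonic_succ]
    push_cast
    field_simp
    ring

theorem log_add_one_sub_log_le_inv {x : ℝ} (hx : 0 < x) : log (x + 1) - log x ≤ x⁻¹ := by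
  rw [← log_div (by positivity) hx.ne']
  calc log ((x + 1) / x) ≤ (x + 1) / x - 1 := log_le_sub_one_of_pos (by positivity)
    _ = x⁻¹ := by field_simp; ring

theorem eulerMascheroniConstant_le_harmonic_sub_log {n : ℕ} (hn : n ≠ 0) :
    eulerMascheroniConstant ≤ harmonic n - log n := by
  simpa [eulerMascheroniSeq', hn] using (eulerMascheroniConstant_lt_eulerMascheroniSeq' n).le

theorem harmonic_sub_log_sub_eulerMascheroniConstant_le_inv {n : ℕ} (hn : n ≠ 0) :
    harmonic n - log n - eulerMascheroniConstant ≤ (n : ℝ)⁻¹ := by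
  have hγ : harmonic n - log (n + 1) < eulerMascheroniConstant :=
    eulerMascheroniSeq_lt_eulerMascheroniConstant n
  linarith [log_add_one_sub_log_le_inv (x := n) (by positivity)]

theorem tendsto_log_mul_harmonic_sub_log_sub_eulerMascheroniConstant :
    Tendsto (fun n : ℕ => log n * (harmonic n - log n - eulerMascheroniConstant))
      atTop (𝓝 0) := by
  have hlog_div : Tendsto (fun n : ℕ => log n / n) atTop (𝓝 0) :=
    isLittleO_log_id_atTop.tendsto_div_nhds_zero.comp tendsto_natCast_atTop_atTop
  refine tendsto_of_tendsto_of_tendsto_of_le_of_le' tendsto_const_nhds hlog_div ?_ ?_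
  all_goals
    filter_upwards [eventually_ne_atTop 0] with n hn
    have hlog : 0 ≤ log n := log_natCast_nonneg n
  · exact mul_nonneg hlog (sub_nonneg.2 (eulerMascheroniConstant_le_harmonic_sub_log hn))
  · exact mul_le_mul_of_nonneg_left (harmonic_sub_log_sub_eulerMascheroniConstant_le_inv hn) hlog

theorem tendsto_sum_Icc_one_div_sq :
    Tendsto (fun n : ℕ => ∑ k ∈ Icc 1 n, 1 / (k : ℝ) ^ 2) atTop (𝓝 (π ^ 2 / 6)) := by
  refine (hasSum_zeta_two.tendsto_sum_nat.comp (tendsto_add_atTop_nat 1)).congr fun n => ?_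
  rw [Function.comp_apply, range_eq_Ico, sum_eq_sum_Ico_succ_bot n.succ_pos,
    Nat.succ_eq_add_one, Ico_add_one_right_eq_Icc]
  simp

theorem stmt_0 :
    Tendsto (fun n : ℕ =>
        (∑ k ∈ Finset.Icc 1 n, ((harmonic k : ℝ) / k))
          - Real.eulerMascheroniConstant * Real.log n - (Real.log n) ^ 2 / 2)
      atTop (nhds ((Real.pi ^ 2 / 6 + Real.eulerMascheroniConstant ^ 2) / 2)) := by
  set γ := eulerMascheroniConstant
  have hdecomp : ∀ n : ℕ,
      (harmonic n - log n : ℝ) ^ 2 / 2 + log n * (harmonic n - log n - γ)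
        + (∑ k ∈ Icc 1 n, 1 / (k : ℝ) ^ 2) / 2
      = ∑ k ∈ Icc 1 n, (harmonic k : ℝ) / k - γ * log n - log n ^ 2 / 2 := fun n => by
    rw [sum_Icc_harmonic_div_eq]
    ring
  have hlim := ((tendsto_harmonic_sub_log.pow 2).div_const 2).add
    tendsto_log_mul_harmonic_sub_log_sub_eulerMascheroniConstant |>.add
    (tendsto_sum_Icc_one_div_sq.div_const 2)
  convert hlim.congr hdecomp using 2
  ring
end

section
/- The series ∑_{k=1}^∞ (H_k − γ − log k)/k converges and equals (ζ(2) − γ²)/2 − γ₁, where γ₁ is the first Stieltjes constant. -/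
/-!
Telescoping `H_k / k = (H_k² - H_{k-1}² + 1/k²) / 2` gives
`∑_{k ≤ n} H_k / k = (H_n² + ∑_{k ≤ n} 1/k²) / 2`. Writing `H_n = D_n + log n` with `D_n → γ`, the
`n`-th partial sum of the series becomes
`(∑ 1/k²)/2 - (∑ log k / k - log² n / 2) + (D_n - γ) log n + D_n²/2 - γ D_n`,
and `0 ≤ D_n - γ ≤ 1/n` kills the cross term `(D_n - γ) log n`.
-/

open Filter Real Topology Finset

lemma Finset.sum_Icc_one_eq_sum_range {M : Type*} [AddCommMonoid M] (f : ℕ → M) (n : ℕ) :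
    ∑ k ∈ Icc 1 n, f k = ∑ k ∈ range n, f (k + 1) := by
  rw [range_eq_Ico, sum_Ico_add' f 0 n 1, zero_add, Ico_add_one_right_eq_Icc]

lemma harmonic_eq_sum_range_real (n : ℕ) :
    (harmonic n : ℝ) = ∑ k ∈ range n, 1 / ((k : ℝ) + 1) := by
  simp [harmonic]

lemma sum_range_harmonic_succ_div (n : ℕ) :
    ∑ k ∈ range n, (harmonic (k + 1) : ℝ) / (k + 1)
      = ((harmonic n : ℝ) ^ 2 + ∑ k ∈ range n, 1 / ((k : ℝ) + 1) ^ 2) / 2 := by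
  induction n with
  | zero => simp
  | succ n ih =>
    rw [sum_range_succ, sum_range_succ, ih, harmonic_succ]
    push_cast
    field_simp
    ring

lemma sum_range_harmonic_sub_log_div (c : ℝ) (n : ℕ) :
    ∑ k ∈ range n, ((harmonic (k + 1) : ℝ) - c - log (k + 1)) / (k + 1)
      = (∑ k ∈ range n, 1 / ((k : ℝ) + 1) ^ 2) / 2
        - ((∑ k ∈ Icc 1 n, log k / k) - log n ^ 2 / 2)
        + ((harmonic n : ℝ) - log n - c) * log n
        + (((harmonic n : ℝ) - log n) ^ 2 / 2 - c * ((harmonic n : ℝ) - log n)) := by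
  have hsplit : ∑ k ∈ range n, ((harmonic (k + 1) : ℝ) - c - log (k + 1)) / (k + 1)
      = ∑ k ∈ range n, (harmonic (k + 1) : ℝ) / (k + 1)
        - c * ∑ k ∈ range n, 1 / ((k : ℝ) + 1) - ∑ k ∈ range n, log (k + 1) / (k + 1) := by
    rw [mul_sum, ← sum_sub_distrib, ← sum_sub_distrib]
    exact sum_congr rfl fun k _ => by ring
  rw [hsplit, sum_range_harmonic_succ_div, ← harmonic_eq_sum_range_real,
    sum_Icc_one_eq_sum_range]
  push_cast
  ring

lemma tendsto_sum_range_one_div_add_one_sq :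
    Tendsto (fun n : ℕ => ∑ k ∈ range n, 1 / ((k : ℝ) + 1) ^ 2) atTop (𝓝 (π ^ 2 / 6)) := by
  simpa using ((hasSum_nat_add_iff' 1).mpr hasSum_zeta_two).tendsto_sum_nat

lemma eulerMascheroniConstant_lt_harmonic_sub_log {n : ℕ} (hn : n ≠ 0) :
    eulerMascheroniConstant < harmonic n - log n := by
  simpa [eulerMascheroniSeq', hn] using eulerMascheroniConstant_lt_eulerMascheroniSeq' n

lemma harmonic_sub_log_sub_eulerMascheroniConstant_le (n : ℕ) :
    harmonic n - log n - eulerMascheroniConstant ≤ 1 / n := by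
  rcases Nat.eq_zero_or_pos n with rfl | hn
  · simpa using (one_half_lt_eulerMascheroniConstant.trans' one_half_pos).le
  have hγ := eulerMascheroniSeq_lt_eulerMascheroniConstant n
  have hlog : log ((n : ℝ) + 1) - log n ≤ 1 / n := by
    rw [← log_div (by positivity) (by positivity)]
    calc log (((n : ℝ) + 1) / n) ≤ ((n : ℝ) + 1) / n - 1 := log_le_sub_one_of_pos (by positivity)
      _ = 1 / n := by field_simp; ring
  rw [eulerMascheroniSeq] at hγ
  linarith

lemma tendsto_harmonic_sub_log_sub_mul_log :
    Tendsto (fun n : ℕ => ((harmonic n : ℝ) - log n - eulerMascheroniConstant) * log n)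
      atTop (𝓝 0) := by
  have hlog_div : Tendsto (fun n : ℕ => log n / n) atTop (𝓝 0) :=
    isLittleO_log_id_atTop.tendsto_div_nhds_zero.comp tendsto_natCast_atTop_atTop
  refine tendsto_of_tendsto_of_tendsto_of_le_of_le' tendsto_const_nhds hlog_div ?_ ?_
  · filter_upwards [eventually_ne_atTop 0] with n hn
    have := eulerMascheroniConstant_lt_harmonic_sub_log hn
    exact mul_nonneg (by linarith) (log_natCast_nonneg n)
  · refine Eventually.of_forall fun n => ?_
    calc _ ≤ 1 / n * log n := mul_le_mul_of_nonneg_right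
          (harmonic_sub_log_sub_eulerMascheroniConstant_le n) (log_natCast_nonneg n)
      _ = log n / n := by ring

theorem stmt_3 (γ₁ : ℝ)
    (hγ₁ : Tendsto (fun n : ℕ =>
        (∑ k ∈ Finset.Icc 1 n, Real.log k / k) - (Real.log n) ^ 2 / 2)
      atTop (nhds γ₁)) :
    HasSum (fun k : ℕ =>
        ((harmonic (k + 1) : ℝ) - Real.eulerMascheroniConstant - Real.log (k + 1)) / (k + 1))
      ((Real.pi ^ 2 / 6 - Real.eulerMascheroniConstant ^ 2) / 2 - γ₁) := by
  set γ := eulerMascheroniConstant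
  have hterm_nonneg (k : ℕ) : 0 ≤ ((harmonic (k + 1) : ℝ) - γ - log (k + 1)) / (k + 1) := by
    have := eulerMascheroniConstant_lt_harmonic_sub_log k.succ_ne_zero
    push_cast at this
    exact div_nonneg (by linarith) (by positivity)
  rw [hasSum_iff_tendsto_nat_of_nonneg hterm_nonneg]
  have hD := tendsto_harmonic_sub_log
  have hlim := (((tendsto_sum_range_one_div_add_one_sq.div_const 2).sub hγ₁).add
    tendsto_harmonic_sub_log_sub_mul_log).add (((hD.pow 2).div_const 2).sub (hD.const_mul γ))
  simp_rw [sum_range_harmonic_sub_log_div]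
  convert hlim using 2
  ring
end

section
/- ∫_0^1 (ψ(1+x) + γ)/x dx = ∑_{n=1}^∞ log(n+1)/(n(n+1)). -/
/-!
For `0 ≤ x ≤ 1`, the recurrence `ψ(x + 1) = ψ(x) + 1/x`, the values `ψ(n + 1) = -γ + H_n` and the
monotonicity of `ψ` (convexity of `log Γ`) squeeze `ψ(1 + x) + γ` onto the series
`∑ₖ (1/(k+1) - 1/(k+1+x))`. Dividing by `x`, the integrand becomes `∑ₖ 1/((k+1)(k+1+x))`;
integrating term by term gives `∑ₖ (log(k+2) - log(k+1))/(k+1)`, and summation by parts, using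
`log(N+1)/(N+1) → 0`, turns this into `∑ₖ log(k+2)/((k+1)(k+2))`.
-/

/-- The digamma function `ψ(x) = (log Γ)'(x)`. -/
noncomputable def digamma (x : ℝ) : ℝ := deriv (fun y => Real.log (Real.Gamma y)) x

open Real MeasureTheory Filter Topology Set Finset

local notation "γ" => Real.eulerMascheroniConstant

lemma differentiableAt_log_Gamma {x : ℝ} (hx : 0 < x) :
    DifferentiableAt ℝ (fun y => log (Gamma y)) x := by
  refine (differentiableAt_Gamma ?_).log (Gamma_ne_zero ?_) <;>
    exact fun m => ((neg_nonpos.mpr m.cast_nonneg).trans_lt hx).ne'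

lemma digamma_add_one {x : ℝ} (hx : 0 < x) : digamma (x + 1) = digamma x + x⁻¹ := by
  rw [digamma, digamma, ← deriv_comp_add_const, ← deriv_log,
    ← deriv_add (differentiableAt_log_Gamma hx) (differentiableAt_log hx.ne')]
  refine EventuallyEq.deriv_eq ?_
  filter_upwards [eventually_gt_nhds hx] with y hy
  rw [Pi.add_apply, Gamma_add_one hy.ne', log_mul hy.ne' (Gamma_pos_of_pos hy).ne', add_comm]

lemma digamma_add_nat {x : ℝ} (hx : 0 < x) (n : ℕ) :
    digamma (x + n) = digamma x + ∑ k ∈ range n, (x + k)⁻¹ := by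
  induction n with
  | zero => simp
  | succ n ih =>
    rw [Nat.cast_succ, ← add_assoc, digamma_add_one (by positivity), ih, sum_range_succ, add_assoc]

lemma digamma_nat_add_one (n : ℕ) : digamma (n + 1) = -γ + harmonic n := by
  rw [digamma, deriv.log (differentiableAt_Gamma fun m => by linarith [m.cast_nonneg (α := ℝ)])
      (by positivity), deriv_Gamma_nat, Gamma_nat_eq_factorial,
    mul_div_cancel_left₀ _ (by positivity)]

lemma monotoneOn_digamma : MonotoneOn digamma (Ioi 0) :=
  convexOn_log_Gamma.monotoneOn_deriv fun _ hx => differentiableAt_log_Gamma hx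

lemma tendsto_digamma_add_sub_digamma {x : ℝ} (hx₀ : 0 ≤ x) (hx₁ : x ≤ 1) :
    Tendsto (fun n : ℕ => digamma (n + 1 + x) - digamma (n + 1)) atTop (𝓝 0) := by
  have hmono {a b : ℝ} (ha : 0 < a) (hab : a ≤ b) : digamma a ≤ digamma b :=
    monotoneOn_digamma ha (ha.trans_le hab) hab
  refine tendsto_of_tendsto_of_tendsto_of_le_of_le tendsto_const_nhds
    (tendsto_one_div_add_atTop_nhds_zero_nat (𝕜 := ℝ)) (fun n => ?_) fun n => ?_
  · simpa using hmono (by positivity : (0 : ℝ) < n + 1) (le_add_of_nonneg_right hx₀)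
  · have := hmono (by positivity : (0 : ℝ) < n + 1 + x) (by linarith : (n : ℝ) + 1 + x ≤ n + 1 + 1)
    rw [digamma_add_one (by positivity), ← one_div] at this
    linarith

lemma hasSum_digamma_one_add {x : ℝ} (hx₀ : 0 ≤ x) (hx₁ : x ≤ 1) :
    HasSum (fun k : ℕ => ((k : ℝ) + 1)⁻¹ - ((k : ℝ) + 1 + x)⁻¹) (digamma (1 + x) + γ) := by
  have hpartial (n : ℕ) : ∑ k ∈ range n, (((k : ℝ) + 1)⁻¹ - ((k : ℝ) + 1 + x)⁻¹) =
      digamma (1 + x) + γ - (digamma (n + 1 + x) - digamma (n + 1)) := by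
    have hshift := digamma_add_nat (by positivity : 0 < 1 + x) n
    have hterm : ∑ k ∈ range n, ((k : ℝ) + 1 + x)⁻¹ = ∑ k ∈ range n, (1 + x + k)⁻¹ :=
      sum_congr rfl fun k _ => by ring_nf
    rw [sum_sub_distrib, hterm, show (n : ℝ) + 1 + x = 1 + x + n by ring, hshift,
      digamma_nat_add_one, harmonic]
    push_cast
    ring
  refine (hasSum_iff_tendsto_nat_of_nonneg (fun k => sub_nonneg.mpr ?_) _).mpr ?_
  · exact inv_anti₀ (by positivity) (by linarith)
  · simpa [hpartial] using tendsto_const_nhds.sub (tendsto_digamma_add_sub_digamma hx₀ hx₁)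

lemma digamma_one_add_add_eulerMascheroniConstant_div {x : ℝ} (hx₀ : 0 < x) (hx₁ : x ≤ 1) :
    (digamma (1 + x) + γ) / x = ∑' k : ℕ, (((k : ℝ) + 1) * ((k : ℝ) + 1 + x))⁻¹ := by
  refine ((hasSum_digamma_one_add hx₀.le hx₁).div_const x).tsum_eq.symm.trans
    (tsum_congr fun k => ?_)
  field_simp
  ring

section Kernel

variable {a : ℝ}

lemma integrableOn_inv_mul_add (ha : 0 < a) :
    IntegrableOn (fun x => (a * (a + x))⁻¹) (Ioo 0 1) := by
  refine (ContinuousOn.integrableOn_Icc ?_).mono_set Ioo_subset_Icc_self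
  exact (continuousOn_const.mul (continuousOn_const.add continuousOn_id)).inv₀
    fun x hx => (mul_pos ha (add_pos_of_pos_of_nonneg ha hx.1)).ne'

lemma integral_inv_mul_add (ha : 0 < a) :
    ∫ x in Ioo 0 1, (a * (a + x))⁻¹ = (log (a + 1) - log a) / a := by
  rw [← integral_Ioc_eq_integral_Ioo, ← intervalIntegral.integral_of_le zero_le_one]
  simp_rw [mul_inv]
  rw [intervalIntegral.integral_const_mul, intervalIntegral.integral_comp_add_left (fun x => x⁻¹),
    add_zero, integral_inv_of_pos ha (by positivity), log_div (by positivity) ha.ne',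
    inv_mul_eq_div]

lemma integral_norm_inv_mul_add_le (ha : 0 < a) :
    ∫ x in Ioo 0 1, ‖(a * (a + x))⁻¹‖ ≤ (a ^ 2)⁻¹ := by
  calc ∫ x in Ioo 0 1, ‖(a * (a + x))⁻¹‖ ≤ ∫ _ in Ioo (0 : ℝ) 1, (a ^ 2)⁻¹ := by
        refine setIntegral_mono_on (integrableOn_inv_mul_add ha).norm (integrableOn_const (by simp))
          measurableSet_Ioo fun x hx => ?_
        rw [norm_of_nonneg (by have := hx.1; positivity)]
        exact inv_anti₀ (by positivity) (by nlinarith [hx.1])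
    _ = (a ^ 2)⁻¹ := by simp

end Kernel

lemma hasSum_integral_inv_mul_add :
    HasSum (fun k : ℕ => (log (k + 2) - log (k + 1)) / (k + 1))
      (∫ x in Ioo 0 1, ∑' k : ℕ, (((k : ℝ) + 1) * ((k : ℝ) + 1 + x))⁻¹) := by
  have hpos (k : ℕ) : (0 : ℝ) < k + 1 := by positivity
  have hsq : Summable fun k : ℕ => (((k : ℝ) + 1) ^ 2)⁻¹ := by
    simpa using (summable_nat_add_iff 1).mpr (Real.summable_nat_pow_inv.mpr one_lt_two)
  have := hasSum_integral_of_summable_integral_norm (fun k => integrableOn_inv_mul_add (hpos k))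
    (hsq.of_nonneg_of_le (fun k => integral_nonneg fun _ => norm_nonneg _)
      fun k => integral_norm_inv_mul_add_le (hpos k))
  have hval (k : ℕ) : ∫ x in Ioo 0 1, (((k : ℝ) + 1) * ((k : ℝ) + 1 + x))⁻¹ =
      (log (k + 2) - log (k + 1)) / (k + 1) := by
    rw [integral_inv_mul_add (hpos k), add_assoc, one_add_one_eq_two]
  simpa only [hval] using this

lemma sum_range_sub_div_eq (u : ℕ → ℝ) (hu : u 0 = 0) (N : ℕ) :
    ∑ k ∈ range N, (u (k + 1) - u k) / (k + 1) =
      ∑ k ∈ range N, u (k + 1) / ((k + 1) * (k + 2)) + u N / (N + 1) := by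
  induction N with
  | zero => simp [hu]
  | succ N ih =>
    rw [sum_range_succ, sum_range_succ, ih]
    push_cast
    field_simp
    ring

lemma hasSum_div_mul_of_hasSum_sub_div {u : ℕ → ℝ} (hu₀ : u 0 = 0) (hu : ∀ n, 0 ≤ u n)
    (hlim : Tendsto (fun n : ℕ => u n / (n + 1)) atTop (𝓝 0)) {s : ℝ}
    (hs : HasSum (fun k : ℕ => (u (k + 1) - u k) / (k + 1)) s) :
    HasSum (fun k : ℕ => u (k + 1) / ((k + 1) * (k + 2))) s := by
  refine (hasSum_iff_tendsto_nat_of_nonneg (fun k => by have := hu (k + 1); positivity) s).mpr ?_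
  have h := hs.tendsto_sum_nat.sub hlim
  simp_rw [sum_range_sub_div_eq u hu₀, add_sub_cancel_right, sub_zero] at h
  exact h

lemma tendsto_log_nat_add_one_div :
    Tendsto (fun n : ℕ => log ((n : ℝ) + 1) / (n + 1)) atTop (𝓝 0) := by
  simpa [Function.comp_def] using (tendsto_pow_log_div_mul_add_atTop 1 0 1 one_ne_zero).comp
    (tendsto_atTop_add_const_right _ 1 tendsto_natCast_atTop_atTop)

theorem stmt_7 :
    ∫ x in Set.Ioo (0 : ℝ) 1, (digamma (1 + x) + Real.eulerMascheroniConstant) / x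
      = ∑' n : ℕ, Real.log (n + 2) / ((n + 1) * (n + 2)) := by
  rw [setIntegral_congr_fun measurableSet_Ioo
    fun x hx => digamma_one_add_add_eulerMascheroniConstant_div hx.1 hx.2.le]
  have hlog := hasSum_div_mul_of_hasSum_sub_div (u := fun n => log ((n : ℝ) + 1)) (by simp)
    (fun n => log_nonneg (by linarith [n.cast_nonneg (α := ℝ)])) tendsto_log_nat_add_one_div
    (by simpa [add_assoc, one_add_one_eq_two] using hasSum_integral_inv_mul_add)
  refine (HasSum.tsum_eq ?_).symm
  simpa [add_assoc, one_add_one_eq_two] using hlog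
end

section
/- ∑_{n=1}^∞ log(n+1)/(n(n+1)) = ∫_0^1 ((1−x)·log(1−x))/(x·log x) dx. -/
/-!
Expanding `-log (1 - x) = ∑ xⁿ⁺¹/(n+1)` writes the integrand as `∑ₙ (xⁿ⁺¹ - xⁿ)/((n+1) log x)`,
a series of nonnegative functions. Since `(x^b - x^a)/log x = ∫_a^b x^t dt`, Fubini gives
`∫₀¹ (x^b - x^a)/log x dx = ∫_a^b dt/(t+1) = log ((b+1)/(a+1))`, so the integral equals
`∑ₙ (log (n+2) - log (n+1))/(n+1)`, and summation by parts against `log (n+1)/(n+1) → 0`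
turns this into `∑ₙ log (n+2)/((n+1)(n+2))`.
-/

open MeasureTheory Real Set Filter

lemma rpow_sub_rpow_div_log_eq_setIntegral {x : ℝ} (hx : x ∈ Ioo 0 1) {a b : ℝ} (hab : a ≤ b) :
    (x ^ b - x ^ a) / log x = ∫ t in Ioc a b, x ^ t := by
  have hderiv : ∫ t in a..b, x ^ t * log x = x ^ b - x ^ a :=
    intervalIntegral.integral_eq_sub_of_hasDerivAt
      (fun t _ => (hasStrictDerivAt_const_rpow hx.1 t).hasDerivAt)
      (((continuous_const_rpow hx.1.ne').mul continuous_const).intervalIntegrable a b)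
  rw [← hderiv, intervalIntegral.integral_mul_const,
    mul_div_cancel_right₀ _ (log_neg hx.1 hx.2).ne, intervalIntegral.integral_of_le hab]

lemma integrable_rpow_Ioo_prod_Ioc {a : ℝ} (ha : 0 ≤ a) (b : ℝ) :
    Integrable (fun p : ℝ × ℝ => p.1 ^ p.2)
      ((volume.restrict (Ioo 0 1)).prod (volume.restrict (Ioc a b))) := by
  rw [Measure.prod_restrict, ← Measure.volume_eq_prod]
  refine IntegrableOn.of_bound ?_ (by fun_prop) 1 ?_
  · rw [Measure.volume_eq_prod, Measure.prod_prod]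
    exact ENNReal.mul_lt_top measure_Ioo_lt_top measure_Ioc_lt_top
  · filter_upwards [ae_restrict_mem (measurableSet_Ioo.prod measurableSet_Ioc)]
      with ⟨x, t⟩ ⟨⟨hx₀, hx₁⟩, ht, _⟩
    rw [norm_of_nonneg (rpow_nonneg hx₀.le t)]
    exact rpow_le_one hx₀.le hx₁.le (ha.trans ht.le)

lemma integral_rpow_Ioo_zero_one {t : ℝ} (ht : -1 < t) :
    ∫ x in Ioo 0 1, x ^ t = 1 / (t + 1) := by
  rw [← integral_Ioc_eq_integral_Ioo, ← intervalIntegral.integral_of_le zero_le_one,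
    integral_rpow (Or.inl ht), one_rpow, zero_rpow (by linarith), sub_zero]

lemma integrableOn_rpow_sub_rpow_div_log {a b : ℝ} (ha : 0 ≤ a) (hb : 0 ≤ b) :
    IntegrableOn (fun x => (x ^ b - x ^ a) / log x) (Ioo 0 1) := by
  wlog hab : a ≤ b generalizing a b
  · convert (this hb ha (le_of_not_ge hab)).neg using 1
    ext x
    simp only [Pi.neg_apply, ← neg_div, neg_sub]
  refine (integrableOn_congr_fun (fun x hx => rpow_sub_rpow_div_log_eq_setIntegral hx hab)
    measurableSet_Ioo).2 ?_
  exact (integrable_rpow_Ioo_prod_Ioc ha b).integral_prod_left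

lemma integral_rpow_sub_rpow_div_log {a b : ℝ} (ha : 0 ≤ a) (hb : 0 ≤ b) :
    ∫ x in Ioo 0 1, (x ^ b - x ^ a) / log x = log (b + 1) - log (a + 1) := by
  wlog hab : a ≤ b generalizing a b
  · rw [← neg_sub (log _), ← this hb ha (le_of_not_ge hab), ← integral_neg]
    simp only [← neg_div, neg_sub]
  calc ∫ x in Ioo 0 1, (x ^ b - x ^ a) / log x
      = ∫ x in Ioo 0 1, ∫ t in Ioc a b, x ^ t :=
        setIntegral_congr_fun measurableSet_Ioo
          fun x hx => rpow_sub_rpow_div_log_eq_setIntegral hx hab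
    _ = ∫ t in Ioc a b, ∫ x in Ioo 0 1, x ^ t :=
        integral_integral_swap (integrable_rpow_Ioo_prod_Ioc ha b)
    _ = ∫ t in a..b, 1 / (t + 1) := by
        rw [intervalIntegral.integral_of_le hab]
        exact setIntegral_congr_fun measurableSet_Ioc
          fun t ht => integral_rpow_Ioo_zero_one (by linarith [ht.1])
    _ = log (b + 1) - log (a + 1) := by
        rw [intervalIntegral.integral_comp_add_right (fun t => 1 / t),
          integral_one_div_of_pos (by linarith) (by linarith), log_div (by linarith) (by linarith)]

lemma log_add_two_sub_log_add_one_le (n : ℕ) : log (n + 2) - log (n + 1) ≤ 1 / (n + 1) := by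
  have hpos : (0 : ℝ) < n + 1 := by positivity
  have := log_le_sub_one_of_pos (div_pos (by positivity : (0 : ℝ) < n + 2) hpos)
  rw [log_div (by positivity) hpos.ne'] at this
  convert this using 1
  field_simp
  ring

lemma summable_log_sub_log_div :
    Summable fun n : ℕ => (log (n + 2) - log (n + 1)) / (n + 1) := by
  have hnonneg (n : ℕ) : 0 ≤ log ((n : ℝ) + 2) - log (n + 1) :=
    sub_nonneg.2 (log_le_log (by positivity) (by linarith))
  have hsq : Summable fun n : ℕ => 1 / ((n : ℝ) + 1) ^ 2 := by
    simpa using (summable_nat_add_iff 1).2 (summable_one_div_nat_pow.2 one_lt_two)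
  refine hsq.of_nonneg_of_le (fun n => div_nonneg (hnonneg n) (by positivity)) fun n => ?_
  calc (log ((n : ℝ) + 2) - log (n + 1)) / (n + 1) ≤ 1 / (n + 1) / (n + 1) := by
        gcongr
        exact log_add_two_sub_log_add_one_le n
    _ = 1 / ((n : ℝ) + 1) ^ 2 := by rw [div_div, sq]

lemma hasSum_log_div_mul_of_hasSum_log_sub_log_div {s : ℝ}
    (hs : HasSum (fun n : ℕ => (log (n + 2) - log (n + 1)) / (n + 1)) s) :
    HasSum (fun n : ℕ => log (n + 2) / ((n + 1) * (n + 2))) s := by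
  set g : ℕ → ℝ := fun n => log (n + 1) / (n + 1)
  have hterm (n : ℕ) : log ((n : ℝ) + 2) / ((n + 1) * (n + 2))
      = (log (n + 2) - log (n + 1)) / (n + 1) - (g (n + 1) - g n) := by
    simp only [g, Nat.cast_add_one, add_assoc, one_add_one_eq_two]
    field_simp
    ring
  have hg : Tendsto g atTop (nhds 0) := by
    simpa [g, Function.comp_def] using
      (tendsto_pow_log_div_mul_add_atTop 1 0 1 one_ne_zero).comp
        (tendsto_atTop_add_const_right atTop 1 tendsto_natCast_atTop_atTop)
  refine (hasSum_iff_tendsto_nat_of_nonneg (fun n => ?_) s).2 ?_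
  · exact div_nonneg (log_nonneg (by linarith [n.cast_nonneg (α := ℝ)])) (by positivity)
  · have hg₀ : g 0 = 0 := by simp [g]
    simp only [hterm, Finset.sum_sub_distrib, Finset.sum_range_sub (f := g), hg₀, sub_zero]
    simpa using hs.tendsto_sum_nat.sub hg

lemma pow_succ_sub_pow_div_log_eq (n : ℕ) (x : ℝ) :
    (x ^ (n + 1) - x ^ n) / ((n + 1) * log x)
      = (x ^ ((n : ℝ) + 1) - x ^ (n : ℝ)) / log x / (n + 1) := by
  rw [← Nat.cast_add_one, rpow_natCast, rpow_natCast, div_div, mul_comm]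

lemma integrableOn_pow_succ_sub_pow_div_log (n : ℕ) :
    IntegrableOn (fun x : ℝ => (x ^ (n + 1) - x ^ n) / ((n + 1) * log x)) (Ioo 0 1) := by
  simp only [pow_succ_sub_pow_div_log_eq]
  exact (integrableOn_rpow_sub_rpow_div_log (by positivity) (by positivity)).div_const _

lemma integral_pow_succ_sub_pow_div_log (n : ℕ) :
    ∫ x in Ioo 0 1, (x ^ (n + 1) - x ^ n) / ((n + 1) * log x)
      = (log (n + 2) - log (n + 1)) / (n + 1) := by
  simp only [pow_succ_sub_pow_div_log_eq]
  rw [integral_div, integral_rpow_sub_rpow_div_log (by positivity) (by positivity), add_assoc,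
    one_add_one_eq_two]

lemma pow_succ_sub_pow_div_log_nonneg (n : ℕ) {x : ℝ} (hx : x ∈ Ioo 0 1) :
    0 ≤ (x ^ (n + 1) - x ^ n) / ((n + 1) * log x) :=
  div_nonneg_of_nonpos (sub_nonpos.2 (pow_le_pow_of_le_one hx.1.le hx.2.le n.le_succ))
    (mul_nonpos_of_nonneg_of_nonpos (by positivity) (log_nonpos hx.1.le hx.2.le))

lemma hasSum_pow_succ_sub_pow_div_log {x : ℝ} (hx : x ∈ Ioo 0 1) :
    HasSum (fun n : ℕ => (x ^ (n + 1) - x ^ n) / ((n + 1) * log x))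
      ((1 - x) * log (1 - x) / (x * log x)) := by
  have hlog : log x ≠ 0 := (log_neg hx.1 hx.2).ne
  have hx₀ : x ≠ 0 := hx.1.ne'
  have hterm (n : ℕ) : (x ^ (n + 1) - x ^ n) / ((n + 1) * log x)
      = x ^ (n + 1) / (n + 1) * ((x - 1) / (x * log x)) := by
    field_simp
    ring
  have hsum : (1 - x) * log (1 - x) / (x * log x) = -log (1 - x) * ((x - 1) / (x * log x)) := by
    field_simp
    ring
  simpa only [hterm, hsum] using
    (hasSum_pow_div_log_of_abs_lt_one (abs_lt.2 ⟨by linarith [hx.1], hx.2⟩)).mul_right _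

theorem stmt_10 :
    ∑' n : ℕ, Real.log (n + 2) / ((n + 1) * (n + 2))
      = ∫ x in Set.Ioo (0 : ℝ) 1, ((1 - x) * Real.log (1 - x)) / (x * Real.log x) := by
  refine (hasSum_log_div_mul_of_hasSum_log_sub_log_div ?_).tsum_eq
  have hnorm (n : ℕ) : ∫ x in Ioo 0 1, ‖(x ^ (n + 1) - x ^ n) / ((n + 1) * log x)‖
      = (log (n + 2) - log (n + 1)) / (n + 1) := by
    rw [← integral_pow_succ_sub_pow_div_log]
    exact setIntegral_congr_fun measurableSet_Ioo
      fun x hx => norm_of_nonneg (pow_succ_sub_pow_div_log_nonneg n hx)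
  have hsum := hasSum_integral_of_summable_integral_norm integrableOn_pow_succ_sub_pow_div_log
    (by simpa only [hnorm] using summable_log_sub_log_div)
  rwa [funext integral_pow_succ_sub_pow_div_log, setIntegral_congr_fun measurableSet_Ioo
    fun x hx => (hasSum_pow_succ_sub_pow_div_log hx).tsum_eq] at hsum
end

section
/- For every real a > −1, ∫_0^1 u^a · log(−log u) du = −(γ + log(1+a))/(1+a). -/
/-!
Substituting `u = exp (-x)` turns the integral into `∫₀^∞ exp (-(1 + a) x) log x dx`, and scaling
`x` by `1 + a` reduces this to `∫₀^∞ exp (-t) log t dt = Γ'(1) = -γ`.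
-/

open MeasureTheory Set Real

theorem integral_comp_exp_neg_Ioi {E : Type*} [NormedAddCommGroup E] [NormedSpace ℝ E]
    (g : ℝ → E) (a : ℝ) :
    ∫ x in Ioi a, exp (-x) • g (exp (-x)) = ∫ y in Ioo 0 (exp (-a)), g y := by
  have himage : (fun x ↦ exp (-x)) '' Ioi a = Ioo 0 (exp (-a)) := by
    rw [← image_image exp Neg.neg, image_neg_Ioi, image_exp_Iio]
  rw [← himage, integral_image_eq_integral_abs_deriv_smul measurableSet_Ioi
    (fun x _ ↦ (hasDerivAt_neg x).exp.hasDerivWithinAt)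
    (fun x _ y _ h ↦ neg_injective (exp_injective h))]
  simp [abs_of_pos (exp_pos _)]

theorem integral_exp_neg_mul_log_Ioi :
    ∫ t in Ioi (0 : ℝ), exp (-t) * log t = -eulerMascheroniConstant := by
  have hΓ : HasDerivAt Complex.Gamma (∫ t in Ioi (0 : ℝ), ((exp (-t) * log t : ℝ) : ℂ)) 1 := by
    have hΓint := Complex.hasDerivAt_GammaIntegral (s := 1) (by simp)
    simp only [sub_self, Complex.cpow_zero, one_mul] at hΓint
    refine (hΓint.congr_deriv ?_).congr_of_eventuallyEq ?_
    · push_cast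
      simp only [mul_comm]
    · filter_upwards [(isOpen_lt continuous_const Complex.continuous_re).mem_nhds
        (show (0 : ℝ) < (1 : ℂ).re by simp)] with s hs
      exact Complex.Gamma_eq_integral hs
  rw [integral_complex_ofReal] at hΓ
  simpa using hΓ.real_of_complex.unique hasDerivAt_Gamma_one

-- The integral is `-γ ≠ 0`, whereas a non-integrable function has Bochner integral `0`.
theorem integrableOn_exp_neg_mul_log_Ioi :
    IntegrableOn (fun t : ℝ ↦ exp (-t) * log t) (Ioi 0) :=
  Integrable.of_integral_ne_zero <| by
    rw [integral_exp_neg_mul_log_Ioi, neg_ne_zero]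
    exact (one_half_pos.trans one_half_lt_eulerMascheroniConstant).ne'

theorem integral_exp_neg_mul_mul_log_Ioi {c : ℝ} (hc : 0 < c) :
    ∫ x in Ioi (0 : ℝ), exp (-(c * x)) * log x = -(eulerMascheroniConstant + log c) / c := by
  have hscale := integral_comp_mul_left_Ioi (fun t ↦ exp (-t) * log (t / c)) 0 hc
  simp only [mul_div_cancel_left₀ _ hc.ne', mul_zero, smul_eq_mul] at hscale
  rw [hscale, setIntegral_congr_fun measurableSet_Ioi
      (fun t (ht : 0 < t) ↦ by rw [log_div ht.ne' hc.ne', mul_sub]),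
    integral_sub integrableOn_exp_neg_mul_log_Ioi ((integrableOn_exp_neg_Ioi 0).mul_const _),
    integral_mul_const, integral_exp_neg_mul_log_Ioi, integral_exp_neg_Ioi_zero]
  field_simp
  ring

theorem stmt_11 (a : ℝ) (ha : -1 < a) :
    ∫ u in Set.Ioo (0 : ℝ) 1, u ^ a * Real.log (-Real.log u)
      = -(Real.eulerMascheroniConstant + Real.log (1 + a)) / (1 + a) := by
  have hsubst := integral_comp_exp_neg_Ioi (fun u ↦ u ^ a * log (-log u)) 0
  rw [neg_zero, exp_zero] at hsubst
  rw [← hsubst, ← integral_exp_neg_mul_mul_log_Ioi (show 0 < 1 + a by linarith)]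
  refine setIntegral_congr_fun measurableSet_Ioi fun x _ ↦ ?_
  rw [log_exp, neg_neg, smul_eq_mul, ← exp_mul, ← mul_assoc, ← exp_add]
  ring_nf
end

section
/- ∫_0^1 log(−log u) · log(1−u) du = γ + ∑_{n=1}^∞ log(n+1)/(n(n+1)). -/
/-!
Substituting `u = e^{-t}` turns the integral into `∫₀^∞ e^{-t} log t · log (1 - e^{-t}) dt`.
Expanding `log (1 - e^{-t}) = -∑_{n ≥ 1} e^{-nt} / n` and integrating termwise with
`∫₀^∞ e^{-at} log t dt = -(γ + log a) / a` (the value `Γ'(1) = -γ`, rescaled) gives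
`∑_{n ≥ 1} (γ + log (n + 1)) / (n (n + 1))`, and `∑ 1 / (n (n + 1)) = 1`.
Termwise integration is justified by `∫₀^∞ e^{-at} |log t| dt ≤ (C + log a) / a` for `a ≥ 1`,
with `C = ∫₀^∞ e^{-t} |log t| dt`, obtained by rescaling `t ↦ t / a`.
-/

open Real MeasureTheory Set Filter Asymptotics

lemma integrableOn_exp_neg_mul_log : IntegrableOn (fun t => rexp (-t) * log t) (Ioi 0) := by
  have hf : Continuous fun t : ℝ => ((rexp (-t) : ℝ) : ℂ) := by fun_prop
  -- `e^{-t}` decays faster than any power at `∞` and is bounded at `0`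
  have h := (mellin_hasDerivAt_of_isBigO_rpow (E := ℂ) (a := 2) (b := 0) (s := 1)
    (hf.continuousOn.locallyIntegrableOn measurableSet_Ioi) ?_ (by norm_num) ?_ (by norm_num)).1
  · refine IntegrableOn.congr_fun (Integrable.re h) (fun t _ => ?_) measurableSet_Ioi
    simp [mul_comm, -Complex.ofReal_exp]
  · rw [← isBigO_norm_left]
    simpa only [Complex.norm_real, norm_eq_abs, abs_of_pos (exp_pos _), neg_one_mul] using
      (isLittleO_exp_neg_mul_rpow_atTop zero_lt_one _).isBigO
  · simp_rw [neg_zero, rpow_zero]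
    refine isBigO_const_of_tendsto (y := (1 : ℂ)) ?_ one_ne_zero
    simpa using (hf.tendsto 0).mono_left nhdsWithin_le_nhds

lemma integral_exp_neg_mul_log : ∫ t in Ioi 0, rexp (-t) * log t = -eulerMascheroniConstant := by
  have hΓ : Complex.Gamma =ᶠ[nhds 1] Complex.GammaIntegral := by
    filter_upwards [(isOpen_lt continuous_const Complex.continuous_re).mem_nhds
      (show (0 : ℝ) < (1 : ℂ).re by norm_num)] with s hs using Complex.Gamma_eq_integral hs
  have h := (Complex.hasDerivAt_Gamma_one.congr_of_eventuallyEq hΓ.symm).unique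
    (Complex.hasDerivAt_GammaIntegral (by norm_num))
  simp only [sub_self, Complex.cpow_zero, one_mul] at h
  apply Complex.ofReal_injective
  rw [← integral_complex_ofReal, Complex.ofReal_neg, h]
  simp_rw [Complex.ofReal_mul, mul_comm]

section Scaling

variable {a : ℝ}

lemma integral_exp_neg_mul_mul_comp_log (ha : 0 < a) (g : ℝ → ℝ) :
    ∫ t in Ioi 0, rexp (-(a * t)) * g (log t)
      = a⁻¹ * ∫ x in Ioi 0, rexp (-x) * g (log x - log a) := by
  have h := integral_comp_mul_left_Ioi (fun x => rexp (-x) * g (log x - log a)) 0 ha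
  rw [mul_zero, smul_eq_mul] at h
  rw [← h]
  refine setIntegral_congr_fun measurableSet_Ioi (fun t ht => ?_)
  simp [log_mul ha.ne' (ne_of_gt ht)]

lemma integrableOn_exp_neg_mul_mul_comp_log_iff (ha : 0 < a) (g : ℝ → ℝ) :
    IntegrableOn (fun t => rexp (-(a * t)) * g (log t)) (Ioi 0)
      ↔ IntegrableOn (fun x => rexp (-x) * g (log x - log a)) (Ioi 0) := by
  have h := integrableOn_Ioi_comp_mul_left_iff (fun x => rexp (-x) * g (log x - log a)) 0 ha
  rw [mul_zero] at h
  rw [← h]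
  refine integrableOn_congr_fun (fun t ht => ?_) measurableSet_Ioi
  simp [log_mul ha.ne' (ne_of_gt ht)]

lemma integrableOn_exp_neg_mul_mul_log (ha : 0 < a) :
    IntegrableOn (fun t => rexp (-(a * t)) * log t) (Ioi 0) := by
  refine (integrableOn_exp_neg_mul_mul_comp_log_iff ha id).2 ?_
  refine IntegrableOn.congr_fun
    (integrableOn_exp_neg_mul_log.sub ((integrableOn_exp_neg_Ioi 0).mul_const (log a)))
    (fun x _ => ?_) measurableSet_Ioi
  simp only [id, Pi.sub_apply]
  ring

lemma integral_exp_neg_mul_mul_log (ha : 0 < a) :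
    ∫ t in Ioi 0, rexp (-(a * t)) * log t = -(eulerMascheroniConstant + log a) / a := by
  have h := integral_exp_neg_mul_mul_comp_log ha id
  simp only [id, mul_sub] at h
  rw [h, integral_sub integrableOn_exp_neg_mul_log ((integrableOn_exp_neg_Ioi 0).mul_const _),
    integral_mul_const, integral_exp_neg_mul_log, integral_exp_neg_Ioi_zero]
  field_simp
  ring

lemma integral_exp_neg_mul_mul_abs_log_le (ha : 0 < a) :
    ∫ t in Ioi 0, rexp (-(a * t)) * |log t|
      ≤ ((∫ x in Ioi 0, rexp (-x) * |log x|) + |log a|) / a := by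
  have habs : IntegrableOn (fun x => rexp (-x) * |log x|) (Ioi 0) :=
    IntegrableOn.congr_fun integrableOn_exp_neg_mul_log.norm (fun x _ => by simp) measurableSet_Ioi
  have hconst := (integrableOn_exp_neg_Ioi 0).mul_const |log a|
  rw [integral_exp_neg_mul_mul_comp_log ha abs, inv_mul_eq_div]
  gcongr
  calc ∫ x in Ioi 0, rexp (-x) * |log x - log a|
      ≤ ∫ x in Ioi 0, (rexp (-x) * |log x| + rexp (-x) * |log a|) := by
        refine integral_mono_of_nonneg (.of_forall fun x => by positivity) (habs.add hconst)
          (.of_forall fun x => ?_)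
        simp only [← mul_add]
        exact mul_le_mul_of_nonneg_left (abs_sub _ _) (exp_pos _).le
    _ = (∫ x in Ioi 0, rexp (-x) * |log x|) + |log a| := by
        rw [integral_add habs hconst, integral_mul_const, integral_exp_neg_Ioi_zero, one_mul]

end Scaling

lemma hasSum_one_div_add_one_mul_add_two :
    HasSum (fun n : ℕ => 1 / ((n + 1 : ℝ) * (n + 2))) 1 := by
  have hpartial (n : ℕ) :
      ∑ i ∈ Finset.range n, 1 / ((i + 1 : ℝ) * (i + 2)) = 1 - 1 / (n + 1) := by
    have hstep (i : ℕ) :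
        1 / ((i + 1 : ℝ) * (i + 2)) = 1 / (i + 1) - 1 / ((i + 1 : ℕ) + 1) := by
      push_cast; field_simp; ring
    simp_rw [hstep, Finset.sum_range_sub' (fun i : ℕ => 1 / ((i : ℝ) + 1))]
    simp
  rw [hasSum_iff_tendsto_nat_of_nonneg (fun n => by positivity)]
  simp_rw [hpartial]
  simpa using (tendsto_const_nhds (x := (1 : ℝ))).sub tendsto_one_div_add_atTop_nhds_zero_nat

lemma summable_log_add_two_div :
    Summable (fun n : ℕ => log (n + 2) / ((n + 1 : ℝ) * (n + 2))) := by
  -- `log y ≤ 2 √y` makes the terms `O(n ^ (-3/2))`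
  have hsum : Summable (fun n : ℕ => 4 * ((n + 2 : ℕ) : ℝ) ^ (1 / 2 - 2 : ℝ)) :=
    ((summable_nat_add_iff 2).2 (Real.summable_nat_rpow.2 (by norm_num))).mul_left 4
  refine .of_nonneg_of_le
    (fun n => div_nonneg (log_nonneg (by linarith [n.cast_nonneg (α := ℝ)])) (by positivity))
    (fun n => ?_) hsum
  have hy : (0 : ℝ) < n + 2 := by positivity
  have hroot : 0 ≤ (n + 2 : ℝ) ^ (1 / 2 : ℝ) := by positivity
  have hlog : log (n + 2) ≤ 2 * (n + 2 : ℝ) ^ (1 / 2 : ℝ) := by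
    have := log_le_rpow_div hy.le (by norm_num : (0 : ℝ) < 1 / 2)
    linarith
  calc log (n + 2) / ((n + 1 : ℝ) * (n + 2))
      ≤ 2 * (n + 2 : ℝ) ^ (1 / 2 : ℝ) / ((n + 1 : ℝ) * (n + 2)) := by gcongr
    _ ≤ 4 * (n + 2 : ℝ) ^ (1 / 2 : ℝ) / ((n + 2 : ℝ) * (n + 2)) := by
      rw [div_le_div_iff₀ (by positivity) (by positivity)]
      nlinarith [mul_nonneg (mul_nonneg n.cast_nonneg hroot) hy.le]
    _ = 4 * ((n + 2 : ℕ) : ℝ) ^ (1 / 2 - 2 : ℝ) := by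
      rw [rpow_sub (by positivity), rpow_two]; push_cast; ring

lemma integral_Ioo_zero_one_eq_integral_Ioi_exp_neg (g : ℝ → ℝ) :
    ∫ u in Ioo (0 : ℝ) 1, g u = ∫ t in Ioi 0, rexp (-t) * g (rexp (-t)) := by
  have himage : (fun t => rexp (-t)) '' Ioi 0 = Ioo 0 1 := by
    ext u
    constructor
    · rintro ⟨t, ht, rfl⟩
      exact ⟨exp_pos _, exp_lt_one_iff.2 (neg_lt_zero.2 ht)⟩
    · rintro ⟨h0, h1⟩
      exact ⟨-log u, neg_pos.2 (log_neg h0 h1), by simp [exp_log h0]⟩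
  have hderiv (t : ℝ) : HasDerivAt (fun t => rexp (-t)) (-rexp (-t)) t := by
    simpa using (hasDerivAt_neg t).exp
  rw [← himage, integral_image_eq_integral_abs_deriv_smul measurableSet_Ioi
    (fun t _ => (hderiv t).hasDerivWithinAt) (exp_injective.comp neg_injective).injOn]
  simp [abs_of_pos (exp_pos _)]

noncomputable def expLogSeriesTerm (n : ℕ) (t : ℝ) : ℝ :=
  -(rexp (-((n + 2) * t)) * log t) / (n + 1)

lemma hasSum_expLogSeriesTerm {t : ℝ} (ht : 0 < t) :
    HasSum (expLogSeriesTerm · t) (rexp (-t) * (log t * log (1 - rexp (-t)))) := by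
  have h := (hasSum_pow_div_log_of_abs_lt_one (x := rexp (-t))
    (by rw [abs_of_pos (exp_pos _)]; exact exp_lt_one_iff.2 (neg_lt_zero.2 ht))).mul_left
    (-(rexp (-t) * log t))
  rw [show rexp (-t) * (log t * log (1 - rexp (-t))) = -(rexp (-t) * log t) * -log (1 - rexp (-t))
    by ring]
  refine h.congr_fun (fun n => ?_)
  rw [expLogSeriesTerm, ← exp_nat_mul,
    show -((n + 2 : ℝ) * t) = -t + (n + 1 : ℕ) * -t by push_cast; ring, exp_add]
  ring

lemma integrable_expLogSeriesTerm (n : ℕ) :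
    Integrable (expLogSeriesTerm n) (volume.restrict (Ioi 0)) :=
  (integrableOn_exp_neg_mul_mul_log (by positivity)).neg.div_const _

lemma integral_expLogSeriesTerm (n : ℕ) :
    ∫ t in Ioi 0, expLogSeriesTerm n t
      = eulerMascheroniConstant * (1 / ((n + 1) * (n + 2)))
        + log (n + 2) / ((n + 1) * (n + 2)) := by
  simp only [expLogSeriesTerm]
  rw [integral_div, integral_neg, integral_exp_neg_mul_mul_log (by positivity)]
  field_simp

lemma summable_integral_norm_expLogSeriesTerm :
    Summable fun n => ∫ t in Ioi 0, ‖expLogSeriesTerm n t‖ := by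
  set C := ∫ x in Ioi 0, rexp (-x) * |log x|
  refine .of_nonneg_of_le (fun n => integral_nonneg fun t => norm_nonneg _) (fun n => ?_)
    ((hasSum_one_div_add_one_mul_add_two.summable.mul_left C).add summable_log_add_two_div)
  have h := integral_exp_neg_mul_mul_abs_log_le (a := n + 2) (by positivity)
  rw [abs_of_nonneg (log_nonneg (by linarith [n.cast_nonneg (α := ℝ)]))] at h
  simp only [expLogSeriesTerm, norm_div, norm_neg, norm_mul, Real.norm_eq_abs,
    abs_of_pos (exp_pos _), abs_of_pos (show (0 : ℝ) < n + 1 by positivity), integral_div]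
  calc _ ≤ (C + log (n + 2)) / (n + 2) / (n + 1) := by gcongr
    _ = _ := by field_simp

theorem stmt_12 :
    ∫ u in Set.Ioo (0 : ℝ) 1, Real.log (-Real.log u) * Real.log (1 - u)
      = Real.eulerMascheroniConstant
          + ∑' n : ℕ, Real.log (n + 2) / ((n + 1) * (n + 2)) := by
  rw [integral_Ioo_zero_one_eq_integral_Ioi_exp_neg, setIntegral_congr_fun measurableSet_Ioi
    fun t ht => by rw [log_exp, neg_neg, ← (hasSum_expLogSeriesTerm ht).tsum_eq],
    ← integral_tsum_of_summable_integral_norm integrable_expLogSeriesTerm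
      summable_integral_norm_expLogSeriesTerm,
    tsum_congr integral_expLogSeriesTerm,
    ((hasSum_one_div_add_one_mul_add_two.mul_left _).add summable_log_add_two_div.hasSum).tsum_eq,
    mul_one]
end

section
/- ∑_{k=1}^∞ H_k/k! = e·(γ − Ei(−1)), where Ei(−1) = −∫_1^∞ e^{−t}/t dt. -/
/-!
Write `H_n = ∫₀¹ (1 - xⁿ)/(1 - x) dx`. All terms being nonnegative, summing under the integral
gives `∑ H_n/n! = ∫₀¹ (e - eˣ)/(1 - x) dx = e ∫₀¹ (1 - e⁻ᵗ)/t dt`. On the other hand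
`γ = -Γ'(1) = -∫₀^∞ log t e⁻ᵗ dt`; integrating by parts on `(0, 1]` against the antiderivative
`1 - e⁻ᵗ` and on `[1, ∞)` against `-e⁻ᵗ` gives `γ = ∫₀¹ (1 - e⁻ᵗ)/t dt - ∫₁^∞ e⁻ᵗ/t dt`.
-/

open MeasureTheory Set Filter Real Topology
open scoped Nat

theorem Real.hasDerivAt_Gamma_eq_integral {s : ℝ} (hs : 0 < s) :
    HasDerivAt Gamma (∫ t in Ioi 0, t ^ (s - 1) * (log t * exp (-t))) s := by
  have hC := Complex.hasDerivAt_GammaIntegral (s := s) (by simpa using hs)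
  have hreal : (∫ t in Ioi (0:ℝ), (t:ℂ) ^ ((s:ℂ) - 1) * ((log t : ℂ) * (exp (-t) : ℂ)))
      = ((∫ t in Ioi 0, t ^ (s - 1) * (log t * exp (-t)) : ℝ) : ℂ) := by
    rw [← integral_complex_ofReal]
    refine setIntegral_congr_fun measurableSet_Ioi fun t ht => ?_
    push_cast [Complex.ofReal_cpow ht.le]
    rfl
  rw [hreal] at hC
  have hΓ : HasDerivAt Complex.Gamma _ (s : ℂ) := hC.congr_of_eventuallyEq <| by
    filter_upwards [(isOpen_lt continuous_const Complex.continuous_re).mem_nhds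
      (show (0:ℝ) < (s:ℂ).re by simpa using hs)] with z hz using Complex.Gamma_eq_integral hz
  simpa [Complex.Gamma_ofReal] using hΓ.real_of_complex

theorem Real.eulerMascheroniConstant_eq_neg_integral_log_mul_exp_neg :
    eulerMascheroniConstant = -∫ t in Ioi 0, log t * exp (-t) := by
  have h := hasDerivAt_Gamma_eq_integral one_pos
  simp only [sub_self, rpow_zero, one_mul] at h
  rw [← hasDerivAt_Gamma_one.unique h, neg_neg]

lemma intervalIntegrable_log_mul_exp_neg (a b : ℝ) :
    IntervalIntegrable (fun t => log t * exp (-t)) volume a b :=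
  intervalIntegral.intervalIntegrable_log'.mul_continuousOn (by fun_prop)

lemma intervalIntegrable_one_sub_exp_neg_div :
    IntervalIntegrable (fun t => (1 - exp (-t)) / t) volume 0 1 := by
  refine (intervalIntegrable_const (c := (1:ℝ))).mono_fun'
    (Measurable.aestronglyMeasurable (by fun_prop)) ?_
  rw [uIoc_of_le zero_le_one]
  filter_upwards [ae_restrict_mem measurableSet_Ioc] with t ht
  have hexp : 1 - t ≤ exp (-t) := by linarith [add_one_le_exp (-t)]
  have hnum : 0 ≤ 1 - exp (-t) := sub_nonneg.2 (exp_le_one_iff.2 (by linarith [ht.1]))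
  rw [norm_div, norm_of_nonneg hnum, norm_of_nonneg ht.1.le, div_le_one ht.1]
  linarith

lemma integrableOn_log_mul_exp_neg_Ioi_one :
    IntegrableOn (fun t => log t * exp (-t)) (Ioi 1) := by
  have hΓ : IntegrableOn (fun t => t * exp (-t)) (Ioi 0) :=
    (GammaIntegral_convergent two_pos).congr_fun (fun t _ => by norm_num [mul_comm])
      measurableSet_Ioi
  refine (hΓ.mono_set (Ioi_subset_Ioi zero_le_one)).mono' (by fun_prop) ?_
  filter_upwards [ae_restrict_mem measurableSet_Ioi] with t (ht : 1 < t)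
  rw [norm_mul, norm_of_nonneg (log_nonneg ht.le), norm_of_nonneg (exp_pos _).le]
  gcongr
  exact (log_le_sub_one_of_pos (by linarith)).trans (by linarith)

lemma integrableOn_exp_neg_div_Ioi_one :
    IntegrableOn (fun t => exp (-t) / t) (Ioi 1) := by
  refine (exp_neg_integrableOn_Ioi 1 one_pos).mono'
    (Measurable.aestronglyMeasurable (by fun_prop)) ?_
  filter_upwards [ae_restrict_mem measurableSet_Ioi] with t (ht : 1 < t)
  rw [norm_div, norm_of_nonneg (exp_pos _).le, norm_of_nonneg (by linarith), neg_one_mul]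
  exact div_le_self (exp_pos _).le ht.le

lemma integral_log_mul_exp_neg_zero_one :
    ∫ t in (0:ℝ)..1, log t * exp (-t) = -∫ t in (0:ℝ)..1, (1 - exp (-t)) / t := by
  have hF : ∀ x ∈ Ioo (0:ℝ) 1, HasDerivAt (fun t => (1 - exp (-t)) * log t)
      (log x * exp (-x) + (1 - exp (-x)) / x) x := fun x hx =>
    (((hasDerivAt_neg x).exp.const_sub 1).fun_mul (hasDerivAt_log hx.1.ne')).congr_deriv
      (by ring)
  -- `0 ≤ 1 - exp (-t) ≤ t` squeezes the boundary term at `0` against `t log t`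
  have hF₀ : Tendsto (fun t => (1 - exp (-t)) * log t) (𝓝[>] 0) (𝓝 0) := by
    refine squeeze_zero_norm' ?_ ((continuous_mul_log.norm.tendsto' 0 0 (by simp)).mono_left
      nhdsWithin_le_nhds)
    filter_upwards [self_mem_nhdsWithin] with t (ht : 0 < t)
    rw [norm_mul, norm_mul]
    gcongr
    rw [norm_of_nonneg (sub_nonneg.2 (exp_le_one_iff.2 (by linarith))), norm_of_nonneg ht.le]
    linarith [add_one_le_exp (-t)]
  have hF₁ : Tendsto (fun t => (1 - exp (-t)) * log t) (𝓝[<] 1) (𝓝 0) := by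
    have : ContinuousAt (fun t => (1 - exp (-t)) * log t) 1 :=
      (by fun_prop : Continuous fun t => 1 - exp (-t)).continuousAt.mul
        (continuousAt_log one_ne_zero)
    simpa using this.tendsto.mono_left nhdsWithin_le_nhds
  have := intervalIntegral.integral_eq_sub_of_hasDerivAt_of_tendsto zero_lt_one hF
    ((intervalIntegrable_log_mul_exp_neg 0 1).add intervalIntegrable_one_sub_exp_neg_div) hF₀ hF₁
  rw [intervalIntegral.integral_add (intervalIntegrable_log_mul_exp_neg 0 1)
    intervalIntegrable_one_sub_exp_neg_div] at this
  linarith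

lemma integral_log_mul_exp_neg_Ioi_one :
    ∫ t in Ioi (1:ℝ), log t * exp (-t) = ∫ t in Ioi (1:ℝ), exp (-t) / t := by
  have hF : ∀ x ∈ Ioi (1:ℝ), HasDerivAt (fun t => -exp (-t) * log t)
      (log x * exp (-x) - exp (-x) / x) x := fun x hx =>
    ((hasDerivAt_neg x).exp.fun_neg.fun_mul
      (hasDerivAt_log (zero_lt_one.trans hx).ne')).congr_deriv (by ring)
  have hFc : ContinuousWithinAt (fun t => -exp (-t) * log t) (Ici 1) 1 :=
    ((by fun_prop : Continuous fun t => -exp (-t)).continuousAt.mul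
      (continuousAt_log one_ne_zero)).continuousWithinAt
  have hFtop : Tendsto (fun t => -exp (-t) * log t) atTop (𝓝 0) := by
    refine squeeze_zero_norm' ?_ (by simpa using tendsto_pow_mul_exp_neg_atTop_nhds_zero 1)
    filter_upwards [eventually_ge_atTop 1] with t ht
    rw [norm_mul, norm_neg, norm_of_nonneg (exp_pos _).le, norm_of_nonneg (log_nonneg ht), mul_comm]
    gcongr
    exact (log_le_sub_one_of_pos (by linarith)).trans (by linarith)
  have := integral_Ioi_of_hasDerivAt_of_tendsto hFc hF
    (integrableOn_log_mul_exp_neg_Ioi_one.sub integrableOn_exp_neg_div_Ioi_one) hFtop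
  rw [integral_sub integrableOn_log_mul_exp_neg_Ioi_one integrableOn_exp_neg_div_Ioi_one] at this
  simp only [log_one, mul_zero, sub_zero] at this
  linarith

theorem Real.eulerMascheroniConstant_eq_integral_sub_integral :
    eulerMascheroniConstant
      = (∫ t in (0:ℝ)..1, (1 - exp (-t)) / t) - ∫ t in Ioi (1:ℝ), exp (-t) / t := by
  rw [eulerMascheroniConstant_eq_neg_integral_log_mul_exp_neg, ← Ioc_union_Ioi_eq_Ioi zero_le_one,
    setIntegral_union (Ioc_disjoint_Ioi le_rfl) measurableSet_Ioi
      (intervalIntegrable_log_mul_exp_neg 0 1).1 integrableOn_log_mul_exp_neg_Ioi_one,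
    ← intervalIntegral.integral_of_le zero_le_one, integral_log_mul_exp_neg_zero_one,
    integral_log_mul_exp_neg_Ioi_one]
  ring

lemma one_sub_pow_div_one_sub_ae_eq (n : ℕ) :
    (fun x : ℝ => (1 - x ^ n) / (1 - x)) =ᵐ[volume] fun x => ∑ i ∈ Finset.range n, x ^ i := by
  filter_upwards [measure_singleton (1 : ℝ) |> compl_mem_ae_iff.2] with x (hx : x ≠ 1)
  rw [geom_sum_eq hx, ← neg_div_neg_eq, neg_sub, neg_sub]

lemma intervalIntegrable_one_sub_pow_div_one_sub (n : ℕ) (a b : ℝ) :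
    IntervalIntegrable (fun x : ℝ => (1 - x ^ n) / (1 - x)) volume a b :=
  ((continuous_finsetSum _ fun i _ => continuous_pow i).intervalIntegrable a b).congr_ae
    (ae_restrict_of_ae (one_sub_pow_div_one_sub_ae_eq n).symm)

lemma integral_one_sub_pow_div_one_sub (n : ℕ) :
    ∫ x in (0:ℝ)..1, (1 - x ^ n) / (1 - x) = harmonic n := by
  rw [intervalIntegral.integral_congr_ae ((one_sub_pow_div_one_sub_ae_eq n).mono fun x hx _ => hx),
    intervalIntegral.integral_finsetSum fun i _ => intervalIntegral.intervalIntegrable_pow i]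
  simp [harmonic, integral_pow]

lemma one_sub_pow_div_one_sub_nonneg {x : ℝ} (hx₀ : 0 ≤ x) (hx₁ : x ≤ 1) (n : ℕ) :
    0 ≤ (1 - x ^ n) / (1 - x) :=
  div_nonneg (sub_nonneg.2 (pow_le_one₀ hx₀ hx₁)) (sub_nonneg.2 hx₁)

theorem tsum_mul_harmonic_eq_integral {a : ℕ → ℝ} (ha : ∀ n, 0 ≤ a n)
    (hs : Summable fun n => a n * harmonic n) :
    ∑' n, a n * harmonic n = ∫ x in (0:ℝ)..1, ∑' n, a n * ((1 - x ^ n) / (1 - x)) := by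
  have hint (n : ℕ) : ∫ x in (0:ℝ)..1, a n * ((1 - x ^ n) / (1 - x)) = a n * harmonic n := by
    rw [intervalIntegral.integral_const_mul, integral_one_sub_pow_div_one_sub]
  have hnorm (n : ℕ) :
      ∫ x in Ioc (0:ℝ) 1, ‖a n * ((1 - x ^ n) / (1 - x))‖ = a n * harmonic n := by
    rw [← hint, intervalIntegral.integral_of_le zero_le_one]
    refine setIntegral_congr_fun measurableSet_Ioc fun x hx => norm_of_nonneg ?_
    exact mul_nonneg (ha n) (one_sub_pow_div_one_sub_nonneg hx.1.le hx.2 n)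
  simp_rw [intervalIntegral.integral_of_le zero_le_one] at hint ⊢
  rw [← integral_tsum_of_summable_integral_norm
    (fun n => ((intervalIntegrable_one_sub_pow_div_one_sub n 0 1).1.const_mul (a n)))
    (by simpa only [hnorm] using hs)]
  exact tsum_congr fun n => (hint n).symm

lemma harmonic_nonneg (n : ℕ) : 0 ≤ harmonic n := by
  unfold harmonic
  positivity

lemma harmonic_le_self (n : ℕ) : harmonic n ≤ n := by
  induction n with
  | zero => simp
  | succ n ih =>
    rw [harmonic_succ]
    push_cast
    linarith [inv_le_one_of_one_le₀ (by simp : (1 : ℚ) ≤ n + 1)]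

lemma summable_harmonic_div_factorial : Summable fun n => (harmonic n : ℝ) / n ! := by
  refine (summable_pow_div_factorial 2).of_nonneg_of_le
    (fun n => div_nonneg (mod_cast harmonic_nonneg n) (by positivity)) fun n => ?_
  gcongr
  calc (harmonic n : ℝ) ≤ n := mod_cast harmonic_le_self n
    _ ≤ 2 ^ n := mod_cast Nat.lt_two_pow_self.le

-- Holds for every `x`: at `x = 1` both sides are `0` because `a / 0 = 0`.
lemma tsum_inv_factorial_mul_one_sub_pow_div (x : ℝ) :
    ∑' n, (n ! : ℝ)⁻¹ * ((1 - x ^ n) / (1 - x)) = (exp 1 - exp x) / (1 - x) := by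
  have h := ((NormedSpace.expSeries_div_hasSum_exp (1 : ℝ)).sub
    (NormedSpace.expSeries_div_hasSum_exp x)).div_const (1 - x)
  rw [← exp_eq_exp_ℝ] at h
  refine (tsum_congr fun n => ?_).trans h.tsum_eq
  rw [one_pow]
  ring

lemma integral_exp_sub_div :
    ∫ x in (0:ℝ)..1, (exp 1 - exp x) / (1 - x) = exp 1 * ∫ t in (0:ℝ)..1, (1 - exp (-t)) / t := by
  calc ∫ x in (0:ℝ)..1, (exp 1 - exp x) / (1 - x)
      = ∫ x in (0:ℝ)..1, exp 1 * ((1 - exp (-(1 - x))) / (1 - x)) := by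
        refine intervalIntegral.integral_congr fun x _ => ?_
        rw [neg_sub, exp_sub]
        field_simp
    _ = exp 1 * ∫ t in (0:ℝ)..1, (1 - exp (-t)) / t := by
        rw [intervalIntegral.integral_comp_sub_left (fun t => exp 1 * ((1 - exp (-t)) / t)),
          intervalIntegral.integral_const_mul]
        norm_num

theorem tsum_harmonic_div_factorial :
    ∑' n, (harmonic n : ℝ) / n ! = exp 1 * ∫ t in (0:ℝ)..1, (1 - exp (-t)) / t := by
  calc ∑' n, (harmonic n : ℝ) / n ! = ∑' n, (n ! : ℝ)⁻¹ * harmonic n := by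
        simp_rw [div_eq_inv_mul]
    _ = ∫ x in (0:ℝ)..1, ∑' n, (n ! : ℝ)⁻¹ * ((1 - x ^ n) / (1 - x)) :=
        tsum_mul_harmonic_eq_integral (fun n => by positivity)
          (by simpa only [div_eq_inv_mul] using summable_harmonic_div_factorial)
    _ = ∫ x in (0:ℝ)..1, (exp 1 - exp x) / (1 - x) := by
        simp_rw [tsum_inv_factorial_mul_one_sub_pow_div]
    _ = exp 1 * ∫ t in (0:ℝ)..1, (1 - exp (-t)) / t := integral_exp_sub_div

theorem stmt_14 :
    ∑' k : ℕ, (harmonic (k + 1) : ℝ) / (k + 1).factorial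
      = Real.exp 1 * (Real.eulerMascheroniConstant
          - (-(∫ t in Set.Ioi (1 : ℝ), Real.exp (-t) / t))) := by
  have hshift := summable_harmonic_div_factorial.tsum_eq_zero_add
  simp only [harmonic_zero, Rat.cast_zero, zero_div, zero_add] at hshift
  rw [← hshift, tsum_harmonic_div_factorial, eulerMascheroniConstant_eq_integral_sub_integral]
  ring
end

section
/- ∑_{k=1}^∞ (−1)^{k−1} (1/k − log(1 + 1/k)) = log(4/π). -/
/-!
Pairing the terms `2i` and `2i + 1`, the even partial sums split into an alternating harmonic
sum, equal to `H (2n) - H n` for the harmonic numbers `H`, minus `log (W n)`, where `W n` is the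
`n`-th partial Wallis product: the factor `(2i+2)/(2i+1) * (2i+2)/(2i+3)` of `W` is exactly
`(1 + 1/(2i+1)) / (1 + 1/(2i+2))`. Since `H n - log n → γ` and `W n → π/2`, the even partial
sums tend to `log 2 - log (π/2) = log (4/π)`. The series itself converges absolutely because
`0 ≤ x - log (1 + x) ≤ x²` for `x ≥ 0`, so the even partial sums determine its value.
-/

open Filter Finset Real Topology

lemma Finset.sum_range_two_mul_neg_one_pow_mul {R : Type*} [CommRing R] (g : ℕ → R) (n : ℕ) :
    ∑ k ∈ range (2 * n), (-1) ^ k * g k = ∑ i ∈ range n, (g (2 * i) - g (2 * i + 1)) := by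
  induction n with
  | zero => simp
  | succ n ih =>
    rw [Nat.mul_succ, sum_range_succ, sum_range_succ, sum_range_succ, ih, pow_succ, pow_mul]
    ring

lemma sum_range_two_mul_neg_one_pow_div_succ (n : ℕ) :
    ∑ k ∈ range (2 * n), (-1 : ℝ) ^ k * (1 / ((k : ℝ) + 1)) = harmonic (2 * n) - harmonic n := by
  rw [sum_range_two_mul_neg_one_pow_mul]
  induction n with
  | zero => simp
  | succ n ih =>
    rw [sum_range_succ, ih, Nat.mul_succ, harmonic_succ, harmonic_succ, harmonic_succ]
    push_cast
    field_simp
    ring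

lemma Real.Wallis.log_W_eq_sum (n : ℕ) :
    log (Wallis.W n) =
      ∑ i ∈ range n, (log (1 + 1 / ((2 * i : ℝ) + 1)) - log (1 + 1 / ((2 * i : ℝ) + 1 + 1))) := by
  rw [Wallis.W, log_prod fun i _ ↦ by positivity]
  refine sum_congr rfl fun i _ ↦ ?_
  rw [← log_div (by positivity) (by positivity)]
  congr 1
  field_simp
  ring

lemma sum_range_two_mul_neg_one_pow_mul_log_one_add_inv (n : ℕ) :
    ∑ k ∈ range (2 * n), (-1 : ℝ) ^ k * log (1 + 1 / ((k : ℝ) + 1)) = log (Wallis.W n) := by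
  rw [sum_range_two_mul_neg_one_pow_mul, Wallis.log_W_eq_sum]
  push_cast
  rfl

lemma tendsto_harmonic_two_mul_sub_harmonic :
    Tendsto (fun n : ℕ ↦ (harmonic (2 * n) : ℝ) - harmonic n) atTop (𝓝 (log 2)) := by
  have h2n : Tendsto (fun n : ℕ ↦ 2 * n) atTop atTop := tendsto_id.const_mul_atTop' two_pos
  have hγ := ((tendsto_harmonic_sub_log.comp h2n).sub tendsto_harmonic_sub_log).const_add (log 2)
  rw [sub_self, add_zero] at hγ
  refine hγ.congr' ?_
  filter_upwards [eventually_ne_atTop 0] with n hn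
  simp only [Function.comp_apply, Nat.cast_mul, Nat.cast_ofNat]
  rw [log_mul two_ne_zero (by exact_mod_cast hn)]
  ring

lemma abs_sub_log_one_add_le_sq {x : ℝ} (hx : 0 ≤ x) : |x - log (1 + x)| ≤ x ^ 2 := by
  have hpos : 0 < 1 + x := by linarith
  have hupper : log (1 + x) ≤ x := by linarith [log_le_sub_one_of_pos hpos]
  have hlower : 1 - (1 + x)⁻¹ ≤ log (1 + x) := one_sub_inv_le_log_of_pos hpos
  have hsq : x - (1 - (1 + x)⁻¹) ≤ x ^ 2 := by
    rw [show x - (1 - (1 + x)⁻¹) = x ^ 2 / (1 + x) by field_simp; ring]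
    exact div_le_self (sq_nonneg x) (by linarith)
  rw [abs_of_nonneg (sub_nonneg.mpr hupper)]
  linarith

lemma summable_neg_one_pow_mul_inv_succ_sub_log :
    Summable fun k : ℕ ↦ (-1 : ℝ) ^ k * (1 / ((k : ℝ) + 1) - log (1 + 1 / ((k : ℝ) + 1))) := by
  have hsq : Summable fun k : ℕ ↦ (1 / ((k : ℝ) + 1)) ^ 2 := by
    simpa using (summable_nat_add_iff 1).mpr (summable_one_div_nat_pow.mpr one_lt_two)
  refine hsq.of_norm_bounded fun k ↦ ?_
  rw [norm_mul, norm_pow, norm_neg, norm_one, one_pow, one_mul, Real.norm_eq_abs]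
  exact abs_sub_log_one_add_le_sq (by positivity)

theorem stmt_17 :
    ∑' k : ℕ, (-1 : ℝ) ^ k * (1 / ((k : ℝ) + 1) - Real.log (1 + 1 / ((k : ℝ) + 1)))
      = Real.log (4 / Real.pi) := by
  have heven : ∀ n : ℕ,
      ∑ k ∈ range (2 * n), (-1 : ℝ) ^ k * (1 / ((k : ℝ) + 1) - log (1 + 1 / ((k : ℝ) + 1))) =
        (harmonic (2 * n) - harmonic n) - log (Wallis.W n) := fun n ↦ by
    simp only [mul_sub, sum_sub_distrib, sum_range_two_mul_neg_one_pow_div_succ,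
      sum_range_two_mul_neg_one_pow_mul_log_one_add_inv]
  have hW : Tendsto (fun n ↦ log (Wallis.W n)) atTop (𝓝 (log (π / 2))) :=
    ((continuousAt_log (by positivity)).tendsto).comp Wallis.tendsto_W_nhds_pi_div_two
  have hlim := tendsto_harmonic_two_mul_sub_harmonic.sub hW
  simp only [← heven] at hlim
  have hpartial := summable_neg_one_pow_mul_inv_succ_sub_log.hasSum.tendsto_sum_nat.comp
    (tendsto_id.const_mul_atTop' two_pos)
  rw [tendsto_nhds_unique hpartial hlim, ← log_div two_ne_zero (by positivity)]
  congr 1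
  field_simp
  norm_num
end

section
/- ∫_0^1 (y − 1)/((1 + y)·log y) dy = log(π/2). -/
/-!
Expanding `1 / (1 + y) = ∑ₖ (1 - y) y^(2k)` turns the integral into a series of nonnegative terms.
Each term is computed by writing `(y - 1) / log y = ∫₀¹ y^s ds` and exchanging the two integrals:
`∫₀¹ (1 - y) y^a (y - 1) / log y dy = ∫₀¹ (1/(a+s+1) - 1/(a+s+2)) ds = log ((a+2)² / ((a+1)(a+3)))`.
At `a = 2k` these are the logarithms of the factors of Wallis' product for `π / 2`.
-/

open MeasureTheory Real Set Filter

lemma integral_Ioo_rpow_eq_sub_div_log {y : ℝ} (hy₀ : 0 < y) (hy₁ : y ≠ 1) :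
    ∫ s in Ioo (0 : ℝ) 1, y ^ s = (y - 1) / log y := by
  rw [← integral_Ioc_eq_integral_Ioo, ← intervalIntegral.integral_of_le zero_le_one]
  simp_rw [rpow_def_of_pos hy₀]
  rw [intervalIntegral.integral_comp_mul_left exp (log_ne_zero_of_pos_of_ne_one hy₀ hy₁),
    integral_exp, mul_one, mul_zero, exp_log hy₀, exp_zero, smul_eq_mul, inv_mul_eq_div]

lemma one_sub_mul_rpow_mul_sub_div_log_eq_integral (a : ℝ) {y : ℝ} (hy₀ : 0 < y) (hy₁ : y ≠ 1) :
    (1 - y) * y ^ a * ((y - 1) / log y) = ∫ s in Ioo (0 : ℝ) 1, (1 - y) * y ^ (a + s) := by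
  simp_rw [rpow_add hy₀, ← mul_assoc]
  rw [integral_const_mul, integral_Ioo_rpow_eq_sub_div_log hy₀ hy₁]

lemma integral_Ioo_one_sub_mul_rpow {a : ℝ} (ha : -1 < a) :
    ∫ y in Ioo (0 : ℝ) 1, (1 - y) * y ^ a = 1 / (a + 1) - 1 / (a + 2) := by
  have hpow : ∀ y ∈ Ioo (0 : ℝ) 1, (1 - y) * y ^ a = y ^ a - y ^ (a + 1) := fun y hy => by
    rw [rpow_add_one hy.1.ne']; ring
  rw [setIntegral_congr_fun measurableSet_Ioo hpow, ← integral_Ioc_eq_integral_Ioo,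
    ← intervalIntegral.integral_of_le zero_le_one,
    intervalIntegral.integral_sub (intervalIntegral.intervalIntegrable_rpow' ha)
      (intervalIntegral.intervalIntegrable_rpow' (by linarith)),
    integral_rpow (Or.inl ha), integral_rpow (Or.inl (by linarith)), one_rpow, one_rpow,
    zero_rpow (by linarith), zero_rpow (by linarith)]
  ring

lemma integrable_one_sub_mul_rpow_add {a : ℝ} (ha : 0 ≤ a) :
    Integrable (fun p : ℝ × ℝ => (1 - p.1) * p.1 ^ (a + p.2))
      ((volume.restrict (Ioo 0 1)).prod (volume.restrict (Ioo 0 1))) := by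
  rw [Measure.prod_restrict, ← Measure.volume_eq_prod]
  have hcont : ContinuousOn (fun p : ℝ × ℝ => (1 - p.1) * p.1 ^ (a + p.2))
      (Ioo 0 1 ×ˢ Ioo 0 1) :=
    (continuousOn_const.sub continuousOn_fst).mul
      (continuousOn_fst.rpow (continuousOn_const.add continuousOn_snd)
        fun p hp => Or.inl hp.1.1.ne')
  refine IntegrableOn.of_bound (by simp [Measure.volume_eq_prod, Measure.prod_prod])
    (hcont.aestronglyMeasurable (measurableSet_Ioo.prod measurableSet_Ioo)) 1 ?_
  filter_upwards [ae_restrict_mem (measurableSet_Ioo.prod measurableSet_Ioo)]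
    with ⟨y, s⟩ ⟨⟨hy₀, hy₁⟩, hs₀, _⟩
  have h₀ : 0 ≤ y ^ (a + s) := rpow_nonneg hy₀.le _
  have h₁ : y ^ (a + s) ≤ 1 := rpow_le_one hy₀.le hy₁.le (by linarith)
  rw [norm_of_nonneg (mul_nonneg (by linarith) h₀)]
  nlinarith

lemma integral_one_div_const_add {c : ℝ} (hc : 0 < c) :
    ∫ s in (0 : ℝ)..1, 1 / (c + s) = log ((c + 1) / c) := by
  rw [intervalIntegral.integral_comp_add_left (fun x => 1 / x), add_zero,
    integral_one_div_of_pos hc (by linarith)]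

lemma integrable_one_sub_mul_rpow_mul_sub_div_log {a : ℝ} (ha : 0 ≤ a) :
    IntegrableOn (fun y => (1 - y) * y ^ a * ((y - 1) / log y)) (Ioo 0 1) := by
  refine (integrable_one_sub_mul_rpow_add ha).integral_prod_left.congr ?_
  filter_upwards [ae_restrict_mem measurableSet_Ioo] with y hy
  exact (one_sub_mul_rpow_mul_sub_div_log_eq_integral a hy.1 hy.2.ne).symm

lemma integral_one_sub_mul_rpow_mul_sub_div_log {a : ℝ} (ha : 0 ≤ a) :
    ∫ y in Ioo (0 : ℝ) 1, (1 - y) * y ^ a * ((y - 1) / log y)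
      = log ((a + 2) / (a + 1) * ((a + 2) / (a + 3))) := by
  calc ∫ y in Ioo (0 : ℝ) 1, (1 - y) * y ^ a * ((y - 1) / log y)
      = ∫ y in Ioo (0 : ℝ) 1, ∫ s in Ioo (0 : ℝ) 1, (1 - y) * y ^ (a + s) :=
        setIntegral_congr_fun measurableSet_Ioo fun y hy =>
          one_sub_mul_rpow_mul_sub_div_log_eq_integral a hy.1 hy.2.ne
    _ = ∫ s in Ioo (0 : ℝ) 1, ∫ y in Ioo (0 : ℝ) 1, (1 - y) * y ^ (a + s) :=
        integral_integral_swap (integrable_one_sub_mul_rpow_add ha)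
    _ = ∫ s in (0 : ℝ)..1, (1 / ((a + 1) + s) - 1 / ((a + 2) + s)) := by
        rw [intervalIntegral.integral_of_le zero_le_one, integral_Ioc_eq_integral_Ioo]
        refine setIntegral_congr_fun measurableSet_Ioo fun s hs => ?_
        rw [integral_Ioo_one_sub_mul_rpow (by linarith [hs.1])]
        ring_nf
    _ = log ((a + 2) / (a + 1) * ((a + 2) / (a + 3))) := by
        have hint {c : ℝ} (hc : 0 < c) :
            IntervalIntegrable (fun s => 1 / (c + s)) volume 0 1 := by
          refine intervalIntegral.intervalIntegrable_one_div (fun s hs => ?_) (by fun_prop)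
          rw [uIcc_of_le zero_le_one] at hs
          linarith [hs.1]
        rw [intervalIntegral.integral_sub (hint (by linarith)) (hint (by linarith)),
          integral_one_div_const_add (by linarith), integral_one_div_const_add (by linarith),
          ← log_div (by positivity) (by positivity)]
        congr 1
        field_simp
        ring

lemma hasSum_one_sub_mul_rpow_two_mul {y : ℝ} (hy₀ : 0 ≤ y) (hy₁ : y < 1) :
    HasSum (fun k : ℕ => (1 - y) * y ^ (2 * k : ℝ)) (1 / (1 + y)) := by
  have hterm : (fun k : ℕ => (1 - y) * y ^ (2 * k : ℝ)) = fun k => (1 - y) * (y ^ 2) ^ k := by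
    ext k
    rw [rpow_mul_natCast hy₀, rpow_two]
  have hsum : 1 / (1 + y) = (1 - y) * (1 - y ^ 2)⁻¹ := by
    field_simp [show 1 - y ^ 2 ≠ 0 by nlinarith]
    ring
  rw [hterm, hsum]
  exact (hasSum_geometric_of_lt_one (sq_nonneg y) (by nlinarith)).mul_left (1 - y)

lemma hasSum_log_wallis :
    HasSum (fun k : ℕ => log ((2 * k + 2) / (2 * k + 1) * ((2 * k + 2) / (2 * k + 3))))
      (log (π / 2)) := by
  have hpos (k : ℕ) : 0 < ((2 : ℝ) * k + 2) / (2 * k + 1) * ((2 * k + 2) / (2 * k + 3)) := by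
    positivity
  have hnonneg (k : ℕ) : 0 ≤ log ((2 * k + 2) / (2 * k + 1) * ((2 * k + 2) / (2 * k + 3))) := by
    apply log_nonneg
    rw [div_mul_div_comm, le_div_iff₀ (by positivity)]
    nlinarith
  rw [hasSum_iff_tendsto_nat_of_nonneg hnonneg]
  simp_rw [← log_prod fun k _ => (hpos k).ne']
  exact ((continuousAt_log (by positivity)).tendsto).comp tendsto_prod_pi_div_two

theorem stmt_18 :
    ∫ y in Set.Ioo (0 : ℝ) 1, (y - 1) / ((1 + y) * Real.log y)
      = Real.log (Real.pi / 2) := by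
  set F : ℕ → ℝ → ℝ := fun k y => (1 - y) * y ^ (2 * k : ℝ) * ((y - 1) / log y)
  have hF_nonneg (k : ℕ) : ∀ y ∈ Ioo (0 : ℝ) 1, 0 ≤ F k y := fun y hy =>
    mul_nonneg (mul_nonneg (by linarith [hy.2]) (rpow_nonneg hy.1.le _))
      (div_nonneg_of_nonpos (by linarith [hy.2]) (log_nonpos hy.1.le hy.2.le))
  have hF_int (k : ℕ) : Integrable (F k) (volume.restrict (Ioo 0 1)) :=
    integrable_one_sub_mul_rpow_mul_sub_div_log (by positivity)
  have hF_integral (k : ℕ) :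
      ∫ y in Ioo (0 : ℝ) 1, F k y = log ((2 * k + 2) / (2 * k + 1) * ((2 * k + 2) / (2 * k + 3))) :=
    integral_one_sub_mul_rpow_mul_sub_div_log (by positivity)
  have hF_norm (k : ℕ) : ∫ y in Ioo (0 : ℝ) 1, ‖F k y‖ = ∫ y in Ioo (0 : ℝ) 1, F k y :=
    setIntegral_congr_fun measurableSet_Ioo fun y hy => norm_of_nonneg (hF_nonneg k y hy)
  calc ∫ y in Ioo (0 : ℝ) 1, (y - 1) / ((1 + y) * log y)
      = ∫ y in Ioo (0 : ℝ) 1, ∑' k, F k y := by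
        refine setIntegral_congr_fun measurableSet_Ioo fun y hy => ?_
        rw [((hasSum_one_sub_mul_rpow_two_mul hy.1.le hy.2).mul_right ((y - 1) / log y)).tsum_eq]
        field_simp
    _ = ∑' k, ∫ y in Ioo (0 : ℝ) 1, F k y := by
        refine (integral_tsum_of_summable_integral_norm hF_int ?_).symm
        simpa only [hF_norm, hF_integral] using hasSum_log_wallis.summable
    _ = log (π / 2) := by
        simpa only [hF_integral] using hasSum_log_wallis.tsum_eq
end
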